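/- arXiv:1509.06611 — 2 statements merged into one kernel-verified Lean document; each statement's English description precedes it below -/
import Mathlib

section
/- Idle region of the optimal policy (Theorem 1, Property 1): let V : 𝒬 → ℝ be monotone and let 𝟎 denote the all-idle action (0,…,0) ∈ 𝒰. If Q ∈ 𝒬 satisfies Q_{n,m} ≤ φ_𝟎⁺(Q_{−n,−m}) for every (n,m) ∈ I, then Δ_{𝟎,v}(Q) ≤ 0 for every v ∈ 𝒰; in particular the idle action 𝟎 attains min_{u∈𝒰} J_V(Q,u), i.e., the optimal multicast scheduling decision at Q is to keep all BSs idle. -/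
/-!
The all-idle action serves no queue, so each queue grows under it, whereas any other feasible
action `v` serves some queue `i` and thereby resets it. Raising `Q i` therefore leaves
`J_V(·, v) - g(·, v)` unchanged but can only increase `J_V(·, 𝟎) - g(·, 𝟎)` when `V` is
monotone, while `g(·, 𝟎) - g(·, v)` does not depend on the state: `Δ_{𝟎,v}` is nondecreasing
in `Q i`. Since `Q i ≤ φ_𝟎⁺`, some `q ≥ Q i` lies in `Φ_𝟎`, where `Δ_{𝟎,v} ≤ 0` by definition.
-/

open Finset

namespace HetNet

/-- The queue index set `I = {(n,m) : 0 ≤ n ≤ N, m ∈ M_n}`. -/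
abbrev Idx {N M : ℕ} (cache : Fin (N + 1) → Finset (Fin M)) : Type :=
  {p : Fin (N + 1) × Fin M // p.2 ∈ cache p.1}

/-- The feasible action space `𝒰`: each BS schedules a cached content or idles (`none`),
and the MBS (BS `0`) and the SBSs do not operate concurrently. -/
def Feasible {N M : ℕ} (cache : Fin (N + 1) → Finset (Fin M))
    (u : Fin (N + 1) → Option (Fin M)) : Prop :=
  (∀ n m, u n = some m → m ∈ cache n) ∧ (u 0 ≠ none → ∀ n, n ≠ 0 → u n = none)

instance {N M : ℕ} (cache : Fin (N + 1) → Finset (Fin M)) :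
    DecidablePred (Feasible cache) := by
  intro u; unfold Feasible; infer_instance

instance {N M : ℕ} (cache : Fin (N + 1) → Finset (Fin M)) :
    Nonempty {u : Fin (N + 1) → Option (Fin M) // Feasible cache u} :=
  ⟨⟨fun _ => none, by unfold Feasible; simp⟩⟩

/-- Queue `(n,m)` is served by action `u`. -/
def Served {N M : ℕ} (u : Fin (N + 1) → Option (Fin M)) (n : Fin (N + 1)) (m : Fin M) : Prop :=
  (n = 0 ∧ u 0 = some m) ∨ (n ≠ 0 ∧ (u 0 = some m ∨ u n = some m))

instance {N M : ℕ} (u : Fin (N + 1) → Option (Fin M)) (n : Fin (N + 1)) (m : Fin M) :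
    Decidable (Served u n m) := by unfold Served; infer_instance

/-- The queue transition map `T(Q,u,A)`. -/
def T {N M : ℕ} {cache : Fin (N + 1) → Finset (Fin M)} (bound : Idx cache → ℕ)
    (Q : Idx cache → ℕ) (u : Fin (N + 1) → Option (Fin M)) (A : Idx cache → ℕ) :
    Idx cache → ℕ := fun i =>
  if Served u i.val.1 i.val.2 then min (A i) (bound i) else min (Q i + A i) (bound i)

/-- The network power cost `p(u) = Σ_n p(n, u_n)` (with `p(n,0) = 0` for an idling BS). -/
def pcost {N M : ℕ} (p : Fin (N + 1) → Fin M → ℝ) (u : Fin (N + 1) → Option (Fin M)) : ℝ :=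
  ∑ n, (u n).elim 0 (p n)

/-- The sum request queue length `d(Q)`. -/
def dcost {N M : ℕ} {cache : Fin (N + 1) → Finset (Fin M)} (Q : Idx cache → ℕ) : ℝ :=
  ∑ i, (Q i : ℝ)

/-- The per-stage cost `g(Q,u) = d(Q) + w·p(u)`. -/
def gcost {N M : ℕ} (p : Fin (N + 1) → Fin M → ℝ) (w : ℝ)
    {cache : Fin (N + 1) → Finset (Fin M)}
    (Q : Idx cache → ℕ) (u : Fin (N + 1) → Option (Fin M)) : ℝ :=
  dcost Q + w * pcost p u

/-- The state-action cost `J_V(Q,u) = g(Q,u) + Σ_{A∈𝒜} P(A)·V(T(Q,u,A))`. -/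
def Jcost {N M : ℕ} (p : Fin (N + 1) → Fin M → ℝ) (w : ℝ)
    {cache : Fin (N + 1) → Finset (Fin M)} (bound : Idx cache → ℕ)
    {ι : Type} [Fintype ι] (P : ι → ℝ) (A : ι → Idx cache → ℕ)
    (V : (Idx cache → ℕ) → ℝ) (Q : Idx cache → ℕ)
    (u : Fin (N + 1) → Option (Fin M)) : ℝ :=
  gcost p w Q u + ∑ a, P a * V (T bound Q u (A a))

open scoped Classical in
/-- `Φ_u(Q_{−n,−m})`: the set of queue lengths `q ∈ {0,…,N_{n,m}}` at coordinate `i = (n,m)`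
such that action `u` dominates every other feasible action at the state obtained from `Q`
by replacing its `(n,m)`-coordinate with `q`.  Its `Finset.max` (valued in `WithBot ℕ`,
`⊥` = −∞) is `φ_u⁺(Q_{−n,−m})`, and its `Finset.min` (valued in `WithTop ℕ`, `⊤` = +∞)
is `φ_u⁻(Q_{−n,−m})`. -/
noncomputable def Phi {N M : ℕ} (p : Fin (N + 1) → Fin M → ℝ) (w : ℝ)
    {cache : Fin (N + 1) → Finset (Fin M)} (bound : Idx cache → ℕ)
    {ι : Type} [Fintype ι] (P : ι → ℝ) (A : ι → Idx cache → ℕ)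
    (V : (Idx cache → ℕ) → ℝ) (u : Fin (N + 1) → Option (Fin M))
    (i : Idx cache) (Q : Idx cache → ℕ) : Finset ℕ :=
  (Finset.range (bound i + 1)).filter fun q =>
    ∀ v, Feasible cache v → v ≠ u →
      Jcost p w bound P A V (Function.update Q i q) u -
        Jcost p w bound P A V (Function.update Q i q) v ≤ 0

section Transition

variable {N M : ℕ} {cache : Fin (N + 1) → Finset (Fin M)} (bound : Idx cache → ℕ)

theorem served_of_eq_some {u : Fin (N + 1) → Option (Fin M)} {n : Fin (N + 1)} {m : Fin M}
    (h : u n = some m) : Served u n m := by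
  by_cases hn : n = 0
  · exact Or.inl ⟨hn, hn ▸ h⟩
  · exact Or.inr ⟨hn, Or.inr h⟩

theorem exists_served_of_ne_idle {u : Fin (N + 1) → Option (Fin M)} (hu : Feasible cache u)
    (hu0 : u ≠ fun _ => none) : ∃ i : Idx cache, Served u i.val.1 i.val.2 := by
  obtain ⟨n, hn⟩ := Function.ne_iff.1 hu0
  obtain ⟨m, hm⟩ := Option.ne_none_iff_exists'.1 hn
  exact ⟨⟨(n, m), hu.1 n m hm⟩, served_of_eq_some hm⟩

theorem T_le_bound (Q : Idx cache → ℕ) (u : Fin (N + 1) → Option (Fin M))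
    (A : Idx cache → ℕ) (i : Idx cache) : T bound Q u A i ≤ bound i := by
  unfold T
  split <;> exact min_le_right _ _

theorem T_mono {Q Q' : Idx cache → ℕ} (h : Q ≤ Q') (u : Fin (N + 1) → Option (Fin M))
    (A : Idx cache → ℕ) : T bound Q u A ≤ T bound Q' u A := by
  intro i
  unfold T
  split
  · exact le_rfl
  · exact min_le_min_right _ (Nat.add_le_add_right (h i) _)

theorem T_eq_of_eq_of_not_served {Q Q' : Idx cache → ℕ} {u : Fin (N + 1) → Option (Fin M)}
    (h : ∀ i, ¬Served u i.val.1 i.val.2 → Q i = Q' i) (A : Idx cache → ℕ) :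
    T bound Q u A = T bound Q' u A := by
  funext i
  unfold T
  split
  · rfl
  · rw [h i ‹_›]

end Transition

variable {N M : ℕ} {cache : Fin (N + 1) → Finset (Fin M)} {bound : Idx cache → ℕ}
  {p : Fin (N + 1) → Fin M → ℝ} {w : ℝ} {ι : Type} [Fintype ι] {P : ι → ℝ}
  {A : ι → Idx cache → ℕ} {V : (Idx cache → ℕ) → ℝ}

theorem Jcost_sub_le_of_served
    (hV : MonotoneOn V {Q | ∀ i, Q i ≤ bound i}) (hP : ∀ a, 0 ≤ P a)
    {Q Q' : Idx cache → ℕ} (hle : Q ≤ Q')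
    {u v : Fin (N + 1) → Option (Fin M)} (hv : ∀ i, ¬Served v i.val.1 i.val.2 → Q i = Q' i) :
    Jcost p w bound P A V Q u - Jcost p w bound P A V Q v ≤
      Jcost p w bound P A V Q' u - Jcost p w bound P A V Q' v := by
  have hu_le : ∑ a, P a * V (T bound Q u (A a)) ≤ ∑ a, P a * V (T bound Q' u (A a)) :=
    sum_le_sum fun a _ => mul_le_mul_of_nonneg_left
      (hV (T_le_bound bound Q u _) (T_le_bound bound Q' u _) (T_mono bound hle u _)) (hP a)
  have hv_eq : ∑ a, P a * V (T bound Q v (A a)) = ∑ a, P a * V (T bound Q' v (A a)) := by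
    simp only [T_eq_of_eq_of_not_served bound hv]
  simp only [Jcost, gcost]
  linarith

theorem Jcost_sub_le_update_of_served
    (hV : MonotoneOn V {Q | ∀ i, Q i ≤ bound i}) (hP : ∀ a, 0 ≤ P a)
    {u v : Fin (N + 1) → Option (Fin M)} {i : Idx cache}
    (hi : Served v i.val.1 i.val.2) {Q : Idx cache → ℕ} {q : ℕ} (hq : Q i ≤ q) :
    Jcost p w bound P A V Q u - Jcost p w bound P A V Q v ≤
      Jcost p w bound P A V (Function.update Q i q) u -
        Jcost p w bound P A V (Function.update Q i q) v := by
  refine Jcost_sub_le_of_served hV hP (fun j => ?_) (fun j hj => ?_)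
  · rcases eq_or_ne j i with rfl | hji
    · simpa using hq
    · simp [hji]
  · have hji : j ≠ i := by
      rintro rfl
      exact hj hi
    simp [hji]

theorem exists_mem_Phi_le {u : Fin (N + 1) → Option (Fin M)} {i : Idx cache}
    {Q : Idx cache → ℕ} (h : (Q i : WithBot ℕ) ≤ (Phi p w bound P A V u i Q).max) :
    ∃ q ∈ Phi p w bound P A V u i Q, Q i ≤ q := by
  obtain ⟨q, hq, hle⟩ := (Finset.le_sup_iff (WithBot.bot_lt_coe (Q i))).1 h
  exact ⟨q, hq, WithBot.coe_le_coe.1 hle⟩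

theorem Jcost_update_sub_nonpos_of_mem_Phi {u v : Fin (N + 1) → Option (Fin M)} {i : Idx cache}
    {Q : Idx cache → ℕ} {q : ℕ} (hq : q ∈ Phi p w bound P A V u i Q) (hv : Feasible cache v)
    (hvu : v ≠ u) :
    Jcost p w bound P A V (Function.update Q i q) u -
      Jcost p w bound P A V (Function.update Q i q) v ≤ 0 := by
  rw [Phi, mem_filter] at hq
  exact hq.2 v hv hvu

theorem optimal_idle_region_general {N M : ℕ} (cache : Fin (N + 1) → Finset (Fin M))
    (bound : Idx cache → ℕ)
    (p : Fin (N + 1) → Fin M → ℝ)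
    (w : ℝ)
    {ι : Type} [Fintype ι] (P : ι → ℝ) (A : ι → Idx cache → ℕ)
    (hP : ∀ a, 0 ≤ P a)
    (V : (Idx cache → ℕ) → ℝ)
    (hV : ∀ Q₁ Q₂ : Idx cache → ℕ, (∀ i, Q₁ i ≤ bound i) → (∀ i, Q₂ i ≤ bound i) →
      (∀ i, Q₁ i ≤ Q₂ i) → V Q₁ ≤ V Q₂)
    (Q : Idx cache → ℕ)
    (hidle : ∀ i : Idx cache,
      (Q i : WithBot ℕ) ≤ (Phi p w bound P A V (fun _ => none) i Q).max) :
    (∀ v, Feasible cache v →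
        Jcost p w bound P A V Q (fun _ => none) - Jcost p w bound P A V Q v ≤ 0) ∧
      Jcost p w bound P A V Q (fun _ => none) =
        ⨅ u : {u // Feasible cache u}, Jcost p w bound P A V Q u.val := by
  have hidle_opt : ∀ v, Feasible cache v →
      Jcost p w bound P A V Q (fun _ => none) - Jcost p w bound P A V Q v ≤ 0 := by
    intro v hv
    by_cases hv0 : v = fun _ => none
    · simp [hv0]
    obtain ⟨i, hi⟩ := exists_served_of_ne_idle hv hv0
    obtain ⟨q, hq, hQq⟩ := exists_mem_Phi_le (hidle i)
    exact (Jcost_sub_le_update_of_served (fun _ h₁ _ h₂ h => hV _ _ h₁ h₂ h) hP hi hQq).trans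
      (Jcost_update_sub_nonpos_of_mem_Phi hq hv hv0)
  let idle : {u // Feasible cache u} := ⟨fun _ => none, by simp [Feasible]⟩
  have hleast : IsLeast (Set.range fun u : {u // Feasible cache u} =>
      Jcost p w bound P A V Q u.val) (Jcost p w bound P A V Q idle.val) := by
    refine ⟨⟨idle, rfl⟩, ?_⟩
    rintro _ ⟨u, rfl⟩
    exact sub_nonpos.1 (hidle_opt u.1 u.2)
  exact ⟨hidle_opt, hleast.isGLB.ciInf_eq.symm⟩

/-- Theorem 1, Property 1: idle region of the optimal policy: let `V` be
monotone and `𝟎` the all-idle action.  If `Q ∈ 𝒬` satisfies `Q_{n,m} ≤ φ_𝟎⁺(Q_{−n,−m})` for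
every `(n,m) ∈ I`, then `Δ_{𝟎,v}(Q) ≤ 0` for every `v ∈ 𝒰`; in particular the idle action
attains `min_{u∈𝒰} J_V(Q,u)`. -/
theorem optimal_idle_region {N M : ℕ} (cache : Fin (N + 1) → Finset (Fin M))
    (hcache0 : ∀ m : Fin M, m ∈ cache 0)
    (bound : Idx cache → ℕ)
    (p : Fin (N + 1) → Fin M → ℝ) (hp : ∀ n m, 0 ≤ p n m)
    (w : ℝ) (hw : 0 ≤ w)
    {ι : Type} [Fintype ι] (P : ι → ℝ) (A : ι → Idx cache → ℕ)
    (hP : ∀ a, 0 ≤ P a) (hPsum : ∑ a, P a = 1)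
    (V : (Idx cache → ℕ) → ℝ)
    (hV : ∀ Q₁ Q₂ : Idx cache → ℕ, (∀ i, Q₁ i ≤ bound i) → (∀ i, Q₂ i ≤ bound i) →
      (∀ i, Q₁ i ≤ Q₂ i) → V Q₁ ≤ V Q₂)
    (Q : Idx cache → ℕ) (hQ : ∀ i, Q i ≤ bound i)
    (hidle : ∀ i : Idx cache,
      (Q i : WithBot ℕ) ≤ (Phi p w bound P A V (fun _ => none) i Q).max) :
    (∀ v, Feasible cache v →
        Jcost p w bound P A V Q (fun _ => none) - Jcost p w bound P A V Q v ≤ 0) ∧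
      Jcost p w bound P A V Q (fun _ => none) =
        ⨅ u : {u // Feasible cache u}, Jcost p w bound P A V Q u.val :=
  optimal_idle_region_general cache bound p w P A hP V hV Q hidle

end HetNet
end

section
/- Monotonicity of the per-queue relative value iteration iterates (equation (44) in the proof of Theorem 2): fix (n,m) ∈ I, a randomized base policy π on 𝒰, and a reference value q† ∈ {0,…,N_{n,m}}. Define V̂⁰_{n,m}(q) = 0, Ĵ^{l+1}_{n,m}(q) = Σ_{u∈𝒰} π(u)·[ g_{n,m}(q,u) + Σ_{A∈𝒜} P(A)·V̂^l_{n,m}(T_{n,m}(q,u,A_{n,m})) ], and V̂^{l+1}_{n,m}(q) = Ĵ^{l+1}_{n,m}(q) − Ĵ^{l+1}_{n,m}(q†). Then for every l ≥ 0 and all q¹ ≤ q² in {0,…,N_{n,m}}, V̂^l_{n,m}(q¹) ≤ V̂^l_{n,m}(q²); i.e., every per-queue iterate is non-decreasing. -/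
/-!
The stage cost `q` and every clipped transition `q ↦ T_{n,m}(q,u,a)` are non-decreasing in `q` and
land in `{0,…,N_{n,m}}`, and one RVIA step averages them with nonnegative weights, so
monotonicity of `V̂^l` on `{0,…,N_{n,m}}` passes to `Ĵ^{l+1}`; subtracting the constant
`Ĵ^{l+1}(q†)` preserves it.
-/

open Finset

namespace HetNet

/-- The per-queue transition map `T_{n,m}(q,u,a)`. -/
def Tq {N M : ℕ} {cache : Fin (N + 1) → Finset (Fin M)} (bound : Idx cache → ℕ)
    (i : Idx cache) (q : ℕ) (u : Fin (N + 1) → Option (Fin M)) (a : ℕ) : ℕ :=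
  if Served u i.val.1 i.val.2 then min a (bound i) else min (q + a) (bound i)

theorem Tq_le_bound {N M : ℕ} {cache : Fin (N + 1) → Finset (Fin M)} (bound : Idx cache → ℕ)
    (i : Idx cache) (q : ℕ) (u : Fin (N + 1) → Option (Fin M)) (a : ℕ) :
    Tq bound i q u a ≤ bound i := by
  unfold Tq; split <;> exact min_le_right _ _

theorem monotone_Tq {N M : ℕ} {cache : Fin (N + 1) → Finset (Fin M)} (bound : Idx cache → ℕ)
    (i : Idx cache) (u : Fin (N + 1) → Option (Fin M)) (a : ℕ) :
    Monotone fun q => Tq bound i q u a := by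
  intro q₁ q₂ hq
  unfold Tq; split
  · exact le_rfl
  · exact min_le_min_right _ (Nat.add_le_add_right hq a)

theorem monotone_expected_cost_add_value {U ι : Type} [Fintype U] [Fintype ι]
    (π : U → ℝ) (hπ : ∀ u, 0 ≤ π u) (P : ι → ℝ) (hP : ∀ a, 0 ≤ P a)
    (c : U → ℝ) (b : ℕ) (f : U → ι → ℕ → ℕ)
    (hf_mono : ∀ u a, Monotone (f u a)) (hf_le : ∀ u a q, f u a q ≤ b)
    (V : ℕ → ℝ) (hV : MonotoneOn V (Set.Iic b)) :
    Monotone fun q : ℕ => ∑ u, π u * (((q : ℝ) + c u) + ∑ a, P a * V (f u a q)) := by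
  intro q₁ q₂ hq
  dsimp only
  gcongr with u _ a _
  exacts [hπ u, hP a, hV (hf_le u a q₁) (hf_le u a q₂) (hf_mono u a hq)]

theorem per_queue_rvia_monotone_general {N M : ℕ} (cache : Fin (N + 1) → Finset (Fin M))
    (bound : Idx cache → ℕ)
    (p : Fin (N + 1) → Fin M → ℝ)
    (w : ℝ)
    {ι : Type} [Fintype ι] (P : ι → ℝ) (A : ι → Idx cache → ℕ)
    (hP : ∀ a, 0 ≤ P a)
    (i : Idx cache)
    (π : {u : Fin (N + 1) → Option (Fin M) // Feasible cache u} → ℝ)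
    (hπ : ∀ u, 0 ≤ π u)
    (qd : ℕ)
    (Vs : ℕ → ℕ → ℝ)
    (h0 : ∀ q, Vs 0 q = 0)
    (hrec : ∀ l : ℕ, ∀ q ≤ bound i, Vs (l + 1) q =
      (∑ u : {u : Fin (N + 1) → Option (Fin M) // Feasible cache u}, π u *
          (((q : ℝ) + w * (if u.val i.val.1 = some i.val.2 then p i.val.1 i.val.2 else 0)) +
            ∑ a, P a * Vs l (Tq bound i q u.val (A a i)))) -
        (∑ u : {u : Fin (N + 1) → Option (Fin M) // Feasible cache u}, π u *
          (((qd : ℝ) + w * (if u.val i.val.1 = some i.val.2 then p i.val.1 i.val.2 else 0)) +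
            ∑ a, P a * Vs l (Tq bound i qd u.val (A a i))))) :
    ∀ l : ℕ, ∀ q₁ q₂ : ℕ, q₁ ≤ bound i → q₂ ≤ bound i → q₁ ≤ q₂ → Vs l q₁ ≤ Vs l q₂ := by
  suffices h : ∀ l, MonotoneOn (Vs l) (Set.Iic (bound i)) from
    fun l _ _ h₁ h₂ hle => h l h₁ h₂ hle
  intro l
  induction l with
  | zero => intro q₁ _ q₂ _ _; simp only [h0, le_refl]
  | succ l ih =>
    intro q₁ h₁ q₂ h₂ hle
    rw [hrec l q₁ h₁, hrec l q₂ h₂]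
    exact sub_le_sub_right (monotone_expected_cost_add_value π hπ P hP _ (bound i)
      (fun u a q => Tq bound i q u.val (A a i)) (fun u a => monotone_Tq bound i u.val _)
      (fun u a q => Tq_le_bound bound i q u.val _) (Vs l) ih hle) _

/-- equation (44): monotonicity of the per-queue RVIA iterates: fix
`(n,m) ∈ I`, a randomized base policy `π` on `𝒰` and a reference value
`q† ∈ {0,…,N_{n,m}}`; define `V̂⁰_{n,m} ≡ 0` and
`V̂^{l+1}_{n,m}(q) = Ĵ^{l+1}_{n,m}(q) − Ĵ^{l+1}_{n,m}(q†)`.  Then every per-queue iterate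
`V̂^l_{n,m}` is non-decreasing on `{0,…,N_{n,m}}`. -/
theorem per_queue_rvia_monotone {N M : ℕ} (cache : Fin (N + 1) → Finset (Fin M))
    (hcache0 : ∀ m : Fin M, m ∈ cache 0)
    (bound : Idx cache → ℕ)
    (p : Fin (N + 1) → Fin M → ℝ) (hp : ∀ n m, 0 ≤ p n m)
    (w : ℝ) (hw : 0 ≤ w)
    {ι : Type} [Fintype ι] (P : ι → ℝ) (A : ι → Idx cache → ℕ)
    (hP : ∀ a, 0 ≤ P a) (hPsum : ∑ a, P a = 1)
    (i : Idx cache)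
    (π : {u : Fin (N + 1) → Option (Fin M) // Feasible cache u} → ℝ)
    (hπ : ∀ u, 0 ≤ π u) (hπsum : ∑ u, π u = 1)
    (qd : ℕ) (hqd : qd ≤ bound i)
    (Vs : ℕ → ℕ → ℝ)
    (h0 : ∀ q, Vs 0 q = 0)
    (hrec : ∀ l : ℕ, ∀ q ≤ bound i, Vs (l + 1) q =
      (∑ u : {u : Fin (N + 1) → Option (Fin M) // Feasible cache u}, π u *
          (((q : ℝ) + w * (if u.val i.val.1 = some i.val.2 then p i.val.1 i.val.2 else 0)) +
            ∑ a, P a * Vs l (Tq bound i q u.val (A a i)))) -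
        (∑ u : {u : Fin (N + 1) → Option (Fin M) // Feasible cache u}, π u *
          (((qd : ℝ) + w * (if u.val i.val.1 = some i.val.2 then p i.val.1 i.val.2 else 0)) +
            ∑ a, P a * Vs l (Tq bound i qd u.val (A a i))))) :
    ∀ l : ℕ, ∀ q₁ q₂ : ℕ, q₁ ≤ bound i → q₂ ≤ bound i → q₁ ≤ q₂ → Vs l q₁ ≤ Vs l q₂ :=
  per_queue_rvia_monotone_general cache bound p w P A hP i π hπ qd Vs h0 hrec

end HetNet
end
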